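/- arXiv:1701.02169 — 13 statements merged into one kernel-verified Lean document; each statement's English description precedes it below -/
import Mathlib

section
/- Let (A,σ) be a central simple algebra with orthogonal involution over a field F of characteristic 2, and for x ∈ S(A,σ) let q_σ(x) ∈ F be the unique scalar with σ(x)x + q_σ(x) ∈ Alt(A,σ). Then for all λ ∈ F and x, y ∈ S(A,σ): q_σ(λx + y) = λ²q_σ(x) + q_σ(y). -/
/-- `q_σ(λx + y) = λ² q_σ(x) + q_σ(y)`. -/
theorem alternator_form_quasilinear {F : Type*} [Field F] [CharP F 2]
    {A : Type*} [Ring A] [Algebra F A] [FiniteDimensional F A]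
    [Algebra.IsCentral F A] [IsSimpleRing A]
    (σ : A ≃ₗ[F] A) (hmul : ∀ a b : A, σ (a * b) = σ b * σ a)
    (hinv : ∀ a : A, σ (σ a) = a)
    (horth : (1 : A) ∉ {z : A | ∃ a : A, z = a - σ a})
    (lam : F) (x y : A) (α β : F)
    (hx : σ x * x - algebraMap F A α ∈ {z : A | ∃ a : A, z = a - σ a})
    (hy : σ y * y - algebraMap F A β ∈ {z : A | ∃ a : A, z = a - σ a}) :
    σ (lam • x + y) * (lam • x + y) - algebraMap F A (lam ^ 2 * α + β) ∈
      {z : A | ∃ a : A, z = a - σ a} := by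
  obtain ⟨a, ha⟩ := hx
  obtain ⟨b, hb⟩ := hy
  haveI : CharP A 2 := charP_of_injective_ringHom (algebraMap F A).injective 2
  have h2 : ∀ z : A, z + z = 0 := fun z => by
    rw [← two_smul ℕ z]
    simp [CharTwo.two_eq_zero (R := A)]
  refine ⟨(lam ^ 2) • a + lam • (σ x * y) + b, ?_⟩
  have hσw : σ ((lam ^ 2) • a + lam • (σ x * y) + b)
      = (lam ^ 2) • σ a + lam • (σ y * x) + σ b := by
    simp [map_add, map_smul, hmul, hinv]
  have hmap : algebraMap F A (lam ^ 2 * α + β)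
      = (lam ^ 2) • algebraMap F A α + algebraMap F A β := by
    simp [map_add, map_mul, Algebra.smul_def]
  have expand : σ (lam • x + y) * (lam • x + y)
      = (lam ^ 2) • (σ x * x) + lam • (σ x * y) + lam • (σ y * x) + σ y * y := by
    rw [map_add, map_smul]
    simp only [add_mul, mul_add, smul_mul_assoc, mul_smul_comm, smul_add, smul_smul,
      ← pow_two]
    abel
  have ha' : σ x * x = a - σ a + algebraMap F A α := by rw [← ha]; abel
  have hb' : σ y * y = b - σ b + algebraMap F A β := by rw [← hb]; abel
  show _ = _
  rw [hσw, hmap, expand, ha', hb']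
  simp only [smul_add, smul_sub]
  rw [← sub_eq_zero]
  have key := h2 (lam • (σ y * x))
  abel_nf
  abel_nf at key
  exact key
end

section
/- Let (A,σ) be a central simple algebra with orthogonal involution over a field F of characteristic 2. The alternator form is multiplicative: q_σ(xy) = q_σ(x)·q_σ(y) for all x, y ∈ S(A,σ). -/
/-- The alternator form is multiplicative: `q_σ(xy) = q_σ(x) q_σ(y)`. -/
theorem alternator_form_mul {F : Type*} [Field F] [CharP F 2]
    {A : Type*} [Ring A] [Algebra F A] [FiniteDimensional F A]
    [Algebra.IsCentral F A] [IsSimpleRing A]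
    (σ : A ≃ₗ[F] A) (hmul : ∀ a b : A, σ (a * b) = σ b * σ a)
    (hinv : ∀ a : A, σ (σ a) = a)
    (horth : (1 : A) ∉ {z : A | ∃ a : A, z = a - σ a})
    (x y : A) (α β : F)
    (hx : σ x * x - algebraMap F A α ∈ {z : A | ∃ a : A, z = a - σ a})
    (hy : σ y * y - algebraMap F A β ∈ {z : A | ∃ a : A, z = a - σ a}) :
    σ (x * y) * (x * y) - algebraMap F A (α * β) ∈ {z : A | ∃ a : A, z = a - σ a} := by
  obtain ⟨a, ha⟩ := hx
  obtain ⟨b, hb⟩ := hy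
  have h1 : σ 1 = 1 := by
    have := hmul (σ 1) 1
    rw [mul_one, hinv, mul_one] at this
    exact this.symm
  have halg : ∀ γ : F, σ (algebraMap F A γ) = algebraMap F A γ := by
    intro γ
    rw [Algebra.algebraMap_eq_smul_one, map_smul, h1]
  have ha' : σ x * x = (a - σ a) + algebraMap F A α := sub_eq_iff_eq_add.mp ha
  have hb' : σ y * y = (b - σ b) + algebraMap F A β := sub_eq_iff_eq_add.mp hb
  refine ⟨algebraMap F A α * b + σ y * a * y, ?_⟩
  have hσ : σ (algebraMap F A α * b + σ y * a * y) =
      algebraMap F A α * σ b + σ y * σ a * y := by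
    rw [map_add, hmul, halg, ← Algebra.commutes,
      show σ y * a * y = (σ y * a) * y from rfl, hmul, hmul, hinv, ← mul_assoc]
  rw [hσ, hmul, map_mul]
  calc σ y * σ x * (x * y) - algebraMap F A α * algebraMap F A β
      = σ y * ((σ x * x) * y) - algebraMap F A α * algebraMap F A β := by
        rw [mul_assoc, mul_assoc]
    _ = σ y * (((a - σ a) + algebraMap F A α) * y)
        - algebraMap F A α * algebraMap F A β := by rw [ha']
    _ = (σ y * a * y - σ y * σ a * y) + algebraMap F A α * (σ y * y)
        - algebraMap F A α * algebraMap F A β := by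
        simp only [add_mul, sub_mul, mul_add, mul_sub, mul_assoc, Algebra.commutes α y, Algebra.commutes α (σ y * y)]
    _ = (σ y * a * y - σ y * σ a * y)
        + algebraMap F A α * ((b - σ b) + algebraMap F A β)
        - algebraMap F A α * algebraMap F A β := by rw [hb']
    _ = algebraMap F A α * b + σ y * a * y
        - (algebraMap F A α * σ b + σ y * σ a * y) := by
        rw [mul_add, mul_sub]; abel
end

section
/- Let (A,σ) be a central simple algebra with orthogonal involution over a field F of characteristic 2. The alternator form q_σ : S(A,σ) → F is a totally singular quadratic form, i.e., q_σ(λv) = λ²q_σ(v) and the associated polar form b(v,w) = q_σ(v+w) - q_σ(v) - q_σ(w) is identically zero. -/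
/-- The alternator form is a totally singular quadratic form: it scales by squares
and its polar form is identically zero. -/
theorem alternator_form_totally_singular {F : Type*} [Field F] [CharP F 2]
    {A : Type*} [Ring A] [Algebra F A] [FiniteDimensional F A]
    [Algebra.IsCentral F A] [IsSimpleRing A]
    (σ : A ≃ₗ[F] A) (hmul : ∀ a b : A, σ (a * b) = σ b * σ a)
    (hinv : ∀ a : A, σ (σ a) = a)
    (horth : (1 : A) ∉ {z : A | ∃ a : A, z = a - σ a}) :
    (∀ (lam : F) (x : A) (α : F),
        σ x * x - algebraMap F A α ∈ {z : A | ∃ a : A, z = a - σ a} →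
        σ (lam • x) * (lam • x) - algebraMap F A (lam ^ 2 * α) ∈
          {z : A | ∃ a : A, z = a - σ a}) ∧
    (∀ (x y : A) (α β γ : F),
        σ x * x - algebraMap F A α ∈ {z : A | ∃ a : A, z = a - σ a} →
        σ y * y - algebraMap F A β ∈ {z : A | ∃ a : A, z = a - σ a} →
        σ (x + y) * (x + y) - algebraMap F A γ ∈ {z : A | ∃ a : A, z = a - σ a} →
        γ - α - β = 0) := by
  have hinj : Function.Injective (algebraMap F A) := (algebraMap F A).injective
  have hchar : CharP A 2 := charP_of_injective_algebraMap hinj 2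
  have hneg : ∀ t : A, -t = t := fun t => CharTwo.neg_eq t
  constructor
  · rintro lam x α ⟨a, ha⟩
    refine ⟨(lam ^ 2) • a, ?_⟩
    rw [map_smul, smul_mul_smul_comm, ← pow_two, map_mul, map_smul,
      ← Algebra.smul_def, ← smul_sub, ha, smul_sub]
  · rintro x y α β γ ⟨a, ha⟩ ⟨b, hb⟩ ⟨c, hc⟩
    by_contra hδ
    set δ := γ - α - β with hδdef
    have key : algebraMap F A δ =
        (σ x * y - (c - a - b)) - σ (σ x * y - (c - a - b)) := by
      have hσσ : σ (σ x * y) = σ y * x := by rw [hmul, hinv]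
      have heq : σ (x + y) * (x + y) =
          σ x * x + σ y * y + (σ x * y + σ y * x) := by
        rw [map_add]; noncomm_ring
      have h2 : σ x * y + σ y * x = σ x * y - σ (σ x * y) := by
        rw [hσσ, sub_eq_add_neg, hneg]
      have : algebraMap F A δ = (σ x * x - algebraMap F A α)
          + (σ y * y - algebraMap F A β)
          - (σ (x + y) * (x + y) - algebraMap F A γ)
          + (σ x * y + σ y * x) := by
        rw [heq, hδdef, map_sub, map_sub]; abel
      rw [this, ha, hb, hc, h2, map_sub, map_sub, map_sub]
      abel
    apply horth
    refine ⟨δ⁻¹ • (σ x * y - (c - a - b)), ?_⟩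
    rw [map_smul, ← smul_sub, ← key, Algebra.smul_def, ← map_mul, inv_mul_cancel₀ hδ, map_one]
end

section
/- Let (A,σ) be a central simple algebra with orthogonal involution over a field F of characteristic 2. If the alternator form q_σ is anisotropic (q_σ(x) = 0 implies x = 0 for x ∈ S(A,σ)), then S(A,σ) has no zero divisors: if x ∈ S(A,σ) is nonzero and y ∈ A satisfies xy = 0, then y = 0. -/
/-- If the alternator form is anisotropic, `S(A,σ)` has no zero divisors. -/
theorem alternator_no_zero_divisors {F : Type*} [Field F] [CharP F 2]
    {A : Type*} [Ring A] [Algebra F A] [FiniteDimensional F A]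
    [Algebra.IsCentral F A] [IsSimpleRing A]
    (σ : A ≃ₗ[F] A) (hmul : ∀ a b : A, σ (a * b) = σ b * σ a)
    (hinv : ∀ a : A, σ (σ a) = a)
    (horth : (1 : A) ∉ {z : A | ∃ a : A, z = a - σ a})
    (haniso : ∀ x : A,
      (∃ α : F, σ x * x - algebraMap F A α ∈ {z : A | ∃ a : A, z = a - σ a}) →
      σ x * x ∈ {z : A | ∃ a : A, z = a - σ a} → x = 0) :
    ∀ x : A,
      (∃ α : F, σ x * x - algebraMap F A α ∈ {z : A | ∃ a : A, z = a - σ a}) →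
      x ≠ 0 → ∀ y : A, x * y = 0 → y = 0 := by
  intro x hx hx0 y hxy
  obtain ⟨α, m, hm⟩ := hx
  -- If α = 0, then σ x * x ∈ Alt and anisotropy gives x = 0, contradiction.
  have hα : α ≠ 0 := by
    rintro rfl
    exact hx0 (haniso x ⟨0, m, hm⟩ ⟨m, by simpa using hm⟩)
  have hsx : σ x * x = (m - σ m) + algebraMap F A α := sub_eq_iff_eq_add.mp hm
  -- σ y * (σ x * x) * y = 0
  have h0 : σ y * (σ x * x) * y = 0 := by
    rw [mul_assoc, mul_assoc, hxy, mul_zero, mul_zero]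
  rw [hsx] at h0
  -- rearrange to: algebraMap α * (σ y * y) = σ y * σ m * y - σ y * m * y
  have key : algebraMap F A α * (σ y * y) = σ y * (σ m) * y - σ y * m * y := by
    have hc : σ y * algebraMap F A α = algebraMap F A α * σ y :=
      (Algebra.commutes α (σ y)).symm
    have expand : σ y * ((m - σ m) + algebraMap F A α) * y
        = (σ y * m * y - σ y * (σ m) * y) + algebraMap F A α * (σ y * y) := by
      simp only [mul_add, add_mul, mul_sub, sub_mul, hc, mul_assoc]
    rw [expand] at h0
    rw [eq_neg_of_add_eq_zero_right h0, neg_sub]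
  -- σ y * y = α⁻¹ • (σ y * σ m * y - σ y * m * y)
  have h2 : σ y * y = α⁻¹ • (σ y * (σ m) * y - σ y * m * y) := by
    rw [← key, Algebra.smul_def, ← mul_assoc, ← map_mul, inv_mul_cancel₀ hα, map_one, one_mul]
  set a : A := α⁻¹ • (σ y * (σ m) * y) with ha
  have hσa : σ a = α⁻¹ • (σ y * m * y) := by
    rw [ha, map_smul, mul_assoc, hmul, hmul, hinv, hinv, mul_assoc]
  have key2 : σ y * y = a - σ a := by
    rw [ha, hσa, ← smul_sub, h2]
  exact haniso y ⟨0, a, by simpa using key2⟩ ⟨a, key2⟩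
end

section
/- Let (A,σ) be a central simple algebra with orthogonal involution over a field F of characteristic 2. If the alternator form q_σ is anisotropic, then S(A,σ) is commutative. -/
/-- If the alternator form is anisotropic, `S(A,σ)` is commutative. -/
theorem alternator_comm {F : Type*} [Field F] [CharP F 2]
    {A : Type*} [Ring A] [Algebra F A] [FiniteDimensional F A]
    [Algebra.IsCentral F A] [IsSimpleRing A]
    (σ : A ≃ₗ[F] A) (hmul : ∀ a b : A, σ (a * b) = σ b * σ a)
    (hinv : ∀ a : A, σ (σ a) = a)
    (horth : (1 : A) ∉ {z : A | ∃ a : A, z = a - σ a})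
    (haniso : ∀ x : A,
      (∃ α : F, σ x * x - algebraMap F A α ∈ {z : A | ∃ a : A, z = a - σ a}) →
      σ x * x ∈ {z : A | ∃ a : A, z = a - σ a} → x = 0) :
    ∀ x : A, (∃ α : F, σ x * x - algebraMap F A α ∈ {z : A | ∃ a : A, z = a - σ a}) →
      ∀ y : A, (∃ β : F, σ y * y - algebraMap F A β ∈ {z : A | ∃ a : A, z = a - σ a}) →
        x * y = y * x := by
  intro x hx y hy
  obtain ⟨α, a, ha⟩ := hx
  obtain ⟨β, b, hb⟩ := hy
  -- characteristic 2 facts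
  have h2 : (2 : F) = 0 := by exact_mod_cast CharP.cast_eq_zero F 2
  have hneg : ∀ c : A, -c = c := by
    intro c
    have h2c : c + c = 0 := by
      have : (2 : F) • c = 0 := by rw [h2, zero_smul]
      rwa [two_smul] at this
    exact neg_eq_of_add_eq_zero_left h2c
  have hsub : ∀ w z : A, w - z = w + z := by
    intro w z; rw [sub_eq_add_neg, hneg]
  -- σ fixes 1 and scalars
  have hone : σ 1 = 1 := by
    have h := hmul 1 (σ 1)
    rw [one_mul, hinv, one_mul] at h
    exact h.symm
  have halg : ∀ γ : F, σ (algebraMap F A γ) = algebraMap F A γ := by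
    intro γ
    rw [Algebra.algebraMap_eq_smul_one, map_smul, hone]
  -- product closure with multiplicative alternator scalar
  have key : ∀ (u v : A) (γ δ : F) (c d : A),
      σ u * u = algebraMap F A γ + (c + σ c) →
      σ v * v = algebraMap F A δ + (d + σ d) →
      ∃ e : A, σ (u * v) * (u * v) = algebraMap F A (γ * δ) + (e + σ e) := by
    intro u v γ δ c d hu hv
    refine ⟨algebraMap F A γ * d + σ v * c * v, ?_⟩
    have hσe : σ (algebraMap F A γ * d + σ v * c * v) =
        algebraMap F A γ * σ d + σ v * σ c * v := by
      rw [map_add, hmul, halg, hmul, hmul, hinv, Algebra.commutes]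
      noncomm_ring
    rw [hσe, hmul]
    have h1 : σ v * σ u * (u * v) = σ v * (σ u * u) * v := by noncomm_ring
    rw [h1, hu]
    have hcomm : σ v * algebraMap F A γ = algebraMap F A γ * σ v :=
      (Algebra.commutes γ (σ v)).symm
    have h2 : σ v * (algebraMap F A γ + (c + σ c)) * v =
        algebraMap F A γ * (σ v * v) + (σ v * c * v + σ v * σ c * v) := by
      rw [mul_add, add_mul, hcomm]
      noncomm_ring
    rw [h2, hv, map_mul]
    noncomm_ring
  -- additive closure
  have keyadd : ∀ (u v : A) (γ δ : F) (c d : A),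
      σ u * u = algebraMap F A γ + (c + σ c) →
      σ v * v = algebraMap F A δ + (d + σ d) →
      ∃ e : A, σ (u + v) * (u + v) = algebraMap F A (γ + δ) + (e + σ e) := by
    intro u v γ δ c d hu hv
    refine ⟨c + d + σ u * v, ?_⟩
    have hσe : σ (c + d + σ u * v) = σ c + σ d + σ v * u := by
      rw [map_add, map_add, hmul, hinv]
    rw [hσe, map_add σ, add_mul, mul_add, mul_add, hu, hv, map_add (algebraMap F A)]
    abel
  -- put the hypotheses in the right form
  rw [sub_eq_iff_eq_add'] at ha hb
  rw [hsub] at ha hb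
  obtain ⟨e₁, he₁⟩ := key x y α β a b ha hb
  obtain ⟨e₂, he₂⟩ := key y x β α b a hb ha
  obtain ⟨e, he⟩ := keyadd (x * y) (y * x) (α * β) (β * α) e₁ e₂ he₁ he₂
  have hz : σ (x * y + y * x) * (x * y + y * x) = e + σ e := by
    rw [he]
    have : α * β + β * α = 0 := by rw [mul_comm β α, ← two_mul, h2, zero_mul]
    rw [this, map_zero, zero_add]
  have hz0 : x * y + y * x = 0 := by
    refine haniso (x * y + y * x) ⟨0, e, ?_⟩ ⟨e, ?_⟩
    · rw [map_zero, sub_zero, hz, hsub]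
    · rw [hz, hsub]
  have := hneg (y * x)
  rw [← this, add_neg_eq_zero] at hz0
  exact hz0
end

section
/- Let (A,σ) be a central simple algebra with orthogonal involution over a field F of characteristic 2. The following are equivalent: (1) σ is direct (σ(x)x ∈ Alt(A,σ) implies x = 0 for all x ∈ A); (2) the alternator form q_σ is anisotropic; (3) S(A,σ) is a field. -/
/-- `σ` is direct iff the alternator form `q_σ` is anisotropic iff `S(A,σ)` is a field. -/
theorem direct_tfae {F : Type*} [Field F] [CharP F 2]
    {A : Type*} [Ring A] [Algebra F A] [FiniteDimensional F A]
    [Algebra.IsCentral F A] [IsSimpleRing A]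
    (σ : A ≃ₗ[F] A) (hmul : ∀ a b : A, σ (a * b) = σ b * σ a)
    (hinv : ∀ a : A, σ (σ a) = a)
    (horth : (1 : A) ∉ {z : A | ∃ a : A, z = a - σ a}) :
    List.TFAE
      [∀ x : A, σ x * x ∈ {z : A | ∃ a : A, z = a - σ a} → x = 0,
       ∀ x : A,
         (∃ α : F, σ x * x - algebraMap F A α ∈ {z : A | ∃ a : A, z = a - σ a}) →
         σ x * x ∈ {z : A | ∃ a : A, z = a - σ a} → x = 0,
       (∀ x : A,
          (∃ α : F, σ x * x - algebraMap F A α ∈ {z : A | ∃ a : A, z = a - σ a}) →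
          ∀ y : A,
            (∃ β : F, σ y * y - algebraMap F A β ∈ {z : A | ∃ a : A, z = a - σ a}) →
            x * y = y * x) ∧
       (∀ x : A,
          (∃ α : F, σ x * x - algebraMap F A α ∈ {z : A | ∃ a : A, z = a - σ a}) →
          x ≠ 0 → ∃ y : A,
            (∃ β : F, σ y * y - algebraMap F A β ∈ {z : A | ∃ a : A, z = a - σ a}) ∧
            x * y = 1)] := by
  set Alt : Set A := {z : A | ∃ a : A, z = a - σ a} with hAltdef
  -- basic closure facts for Alt
  have h2F : (2 : F) = 0 := by have := CharP.cast_eq_zero F 2; simpa using this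
  have hchar : ∀ z : A, z + z = 0 := by
    intro z
    have h := two_smul F z
    rw [h2F, zero_smul] at h
    exact h.symm
  have hzeroAlt : (0 : A) ∈ Alt := ⟨0, by simp⟩
  have haddAlt : ∀ u v : A, u ∈ Alt → v ∈ Alt → u + v ∈ Alt := by
    rintro _ _ ⟨a, rfl⟩ ⟨b, rfl⟩
    exact ⟨a + b, by rw [map_add]; abel⟩
  have hsmulAlt : ∀ (c : F) (u : A), u ∈ Alt → c • u ∈ Alt := by
    rintro c _ ⟨a, rfl⟩
    exact ⟨c • a, by rw [map_smul, smul_sub]⟩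
  have hone : σ (1 : A) = 1 := by
    have h1 : ∀ a : A, σ a = σ (1 : A) * σ a := by
      intro a
      have := hmul a 1
      rwa [mul_one] at this
    obtain ⟨b, hb⟩ : ∃ b, σ b = 1 := ⟨σ 1, hinv 1⟩
    have := h1 b
    rw [hb, mul_one] at this
    exact this.symm
  have hconj : ∀ (y u : A), u ∈ Alt → σ y * u * y ∈ Alt := by
    rintro y _ ⟨a, rfl⟩
    refine ⟨σ y * a * y, ?_⟩
    have hσ : σ (σ y * a * y) = σ y * σ a * y := by
      rw [hmul, hmul, hinv, mul_assoc]
    rw [hσ, mul_sub, sub_mul]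
  -- uniqueness of the alternator-form value
  have huniq : ∀ (x : A) (α β : F),
      σ x * x - algebraMap F A α ∈ Alt → σ x * x - algebraMap F A β ∈ Alt → α = β := by
    intro x α β h1 h2
    by_contra hne
    have hd : algebraMap F A (β - α) ∈ Alt := by
      have h3 := haddAlt _ _ h1 (hsmulAlt (-1) _ h2)
      have : (σ x * x - algebraMap F A α) + (-1 : F) • (σ x * x - algebraMap F A β)
          = algebraMap F A (β - α) := by
        rw [map_sub]
        simp [sub_eq_add_neg]
        abel
      rwa [this] at h3
    have hne' : β - α ≠ 0 := sub_ne_zero.mpr (Ne.symm hne)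
    have h1A : (1 : A) ∈ Alt := by
      have := hsmulAlt (β - α)⁻¹ _ hd
      rwa [Algebra.algebraMap_eq_smul_one, smul_smul, inv_mul_cancel₀ hne', one_smul] at this
    exact horth h1A
  -- multiplicativity
  have hmulS : ∀ (x y : A) (α β : F),
      σ x * x - algebraMap F A α ∈ Alt → σ y * y - algebraMap F A β ∈ Alt →
      σ (x * y) * (x * y) - algebraMap F A (α * β) ∈ Alt := by
    intro x y α β hx hy
    have key : σ (x * y) * (x * y) - algebraMap F A (α * β) =
        σ y * (σ x * x - algebraMap F A α) * y
          + α • (σ y * y - algebraMap F A β) := by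
      rw [hmul]
      simp only [Algebra.algebraMap_eq_smul_one, mul_sub, sub_mul, smul_sub,
        mul_smul_comm, smul_mul_assoc, smul_smul, mul_one, one_mul]
      noncomm_ring
    rw [key]
    exact haddAlt _ _ (hconj y _ hx) (hsmulAlt α _ hy)
  -- additivity
  have haddS : ∀ (x y : A) (α β : F),
      σ x * x - algebraMap F A α ∈ Alt → σ y * y - algebraMap F A β ∈ Alt →
      σ (x + y) * (x + y) - algebraMap F A (α + β) ∈ Alt := by
    intro x y α β hx hy
    have key : σ (x + y) * (x + y) - algebraMap F A (α + β) =
        (σ x * x - algebraMap F A α) + (σ y * y - algebraMap F A β)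
          + (σ x * y - σ y * x) + (σ y * x + σ y * x) := by
      rw [map_add σ x y, map_add (algebraMap F A)]
      noncomm_ring
    rw [key, hchar (σ y * x), add_zero]
    refine haddAlt _ _ (haddAlt _ _ hx hy) ⟨σ x * y, ?_⟩
    rw [hmul, hinv]
  -- the membership predicate of S
  have hmemzero : ∀ x : A, σ x * x ∈ Alt → σ x * x - algebraMap F A (0 : F) ∈ Alt := by
    intro x hx
    rwa [map_zero, sub_zero]
  tfae_have 1 → 2
  · intro h1 x _ hx
    exact h1 x hx
  tfae_have 3 → 1
  · rintro ⟨-, h3⟩ x hx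
    by_contra hne
    obtain ⟨y, ⟨β, hy⟩, hxy⟩ := h3 x ⟨0, hmemzero x hx⟩ hne
    have := hmulS x y 0 β (hmemzero x hx) hy
    rw [zero_mul, map_zero, sub_zero, hxy, hone, one_mul] at this
    exact horth this
  tfae_have 2 → 3
  · intro h2
    constructor
    · rintro x ⟨α, hx⟩ y ⟨β, hy⟩
      have hxy := hmulS x y α β hx hy
      have hyx := hmulS y x β α hy hx
      have hsum := haddS _ _ _ _ hxy hyx
      have hαβ : α * β + β * α = 0 := by
        have : α * β + β * α = 2 * (α * β) := by ring
        rw [this, h2F, zero_mul]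
      rw [hαβ, map_zero, sub_zero] at hsum
      have hz : x * y + y * x = 0 :=
        h2 _ ⟨0, hmemzero _ hsum⟩ hsum
      have := neg_eq_of_add_eq_zero_left (hchar (y * x))
      calc x * y = x * y + (y * x + y * x) := by rw [hchar, add_zero]
        _ = (x * y + y * x) + y * x := by abel
        _ = y * x := by rw [hz, zero_add]
    · rintro x ⟨α, hx⟩ hxne
      have hα : α ≠ 0 := by
        intro h0
        rw [h0, map_zero, sub_zero] at hx
        exact hxne (h2 x ⟨0, hmemzero x hx⟩ hx)
      -- S as a submodule
      let S : Submodule F A :=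
        { carrier := {w : A | ∃ γ : F, σ w * w - algebraMap F A γ ∈ Alt}
          add_mem' := by rintro u v ⟨γ, hu⟩ ⟨δ, hv⟩; exact ⟨γ + δ, haddS u v γ δ hu hv⟩
          zero_mem' := ⟨0, by simpa using hzeroAlt⟩
          smul_mem' := by
            rintro c u ⟨γ, hu⟩
            refine ⟨c * c * γ, ?_⟩
            have key : σ (c • u) * (c • u) - algebraMap F A (c * c * γ) =
                (c * c) • (σ u * u - algebraMap F A γ) := by
              rw [map_smul, smul_mul_smul_comm, smul_sub, Algebra.algebraMap_eq_smul_one,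
                Algebra.algebraMap_eq_smul_one, smul_smul]
            rw [key]
            exact hsmulAlt _ _ hu }
      have hxS : x ∈ S := ⟨α, hx⟩
      have hmulmem : ∀ w : A, w ∈ S → x * w ∈ S := by
        rintro w ⟨γ, hw⟩
        exact ⟨α * γ, hmulS x w α γ hx hw⟩
      let f : S →ₗ[F] S :=
        { toFun := fun s => ⟨x * s, hmulmem s s.2⟩
          map_add' := by intro s t; ext; simp [mul_add]
          map_smul' := by intro c s; ext; simp [mul_smul_comm] }
      have hinj : Function.Injective f := by
        intro s t hst
        have hw : x * ((s : A) - t) = 0 := by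
          have : x * (s : A) = x * (t : A) := congrArg Subtype.val hst
          rw [mul_sub, this, sub_self]
        obtain ⟨γ, hγ⟩ : ((s : A) - t) ∈ S := S.sub_mem s.2 t.2
        have hmem := hmulS x _ α γ hx hγ
        rw [hw] at hmem
        have h0' : σ (0 : A) * 0 - algebraMap F A (0 : F) ∈ Alt := by
          simpa using hzeroAlt
        have : α * γ = 0 := (huniq 0 (α * γ) 0 hmem h0').symm ▸ rfl
        have hγ0 : γ = 0 := by
          rcases mul_eq_zero.mp ((huniq 0 (α * γ) 0 hmem h0')) with h | h
          · exact absurd h hα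
          · exact h
        rw [hγ0, map_zero, sub_zero] at hγ
        have : (s : A) - t = 0 := h2 _ ⟨0, hmemzero _ hγ⟩ hγ
        exact Subtype.ext (sub_eq_zero.mp this)
      have hsurj : Function.Surjective f :=
        (LinearMap.injective_iff_surjective).mp hinj
      have h1S : (1 : A) ∈ S := by
        refine ⟨1, ?_⟩
        rw [hone, one_mul, map_one, sub_self]
        exact hzeroAlt
      obtain ⟨s, hs⟩ := hsurj ⟨1, h1S⟩
      refine ⟨(s : A), s.2, ?_⟩
      exact congrArg Subtype.val hs
  tfae_finish
end

section
/- Let (A,σ) be a central simple algebra with orthogonal involution over a field F of characteristic 2 such that the alternator form q_σ is anisotropic. Then x² ∈ F for every x ∈ S(A,σ); more precisely x² = q_σ(x). -/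
/-- If the alternator form is anisotropic, then `x² = q_σ(x) ∈ F` for all `x ∈ S(A,σ)`. -/
theorem alternator_sq_in_base {F : Type*} [Field F] [CharP F 2]
    {A : Type*} [Ring A] [Algebra F A] [FiniteDimensional F A]
    [Algebra.IsCentral F A] [IsSimpleRing A]
    (σ : A ≃ₗ[F] A) (hmul : ∀ a b : A, σ (a * b) = σ b * σ a)
    (hinv : ∀ a : A, σ (σ a) = a)
    (horth : (1 : A) ∉ {z : A | ∃ a : A, z = a - σ a})
    (haniso : ∀ x : A,
      (∃ α : F, σ x * x - algebraMap F A α ∈ {z : A | ∃ a : A, z = a - σ a}) →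
      σ x * x ∈ {z : A | ∃ a : A, z = a - σ a} → x = 0) :
    ∀ (x : A) (α : F),
      σ x * x - algebraMap F A α ∈ {z : A | ∃ a : A, z = a - σ a} →
      x ^ 2 = algebraMap F A α := by
  intro x α hx
  set k : A := algebraMap F A α with hk
  -- σ fixes 1
  have hσ1 : σ (1 : A) = 1 := by
    have h1 : ∀ b : A, σ 1 * b = b := by
      intro b
      have h := hmul (σ b) 1
      rw [mul_one, hinv] at h
      exact h.symm
    have := h1 1
    rwa [mul_one] at this
  have hσk : σ k = k := by
    rw [hk, Algebra.algebraMap_eq_smul_one, map_smul, hσ1]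
  -- characteristic two facts in A
  have h2 : (2 : A) = 0 := by
    rw [← map_ofNat (algebraMap F A) 2, CharTwo.two_eq_zero, map_zero]
  have hadd : ∀ y : A, y + y = 0 := by
    intro y
    rw [← two_mul, h2, zero_mul]
  -- extract the alternator witness
  obtain ⟨a, ha⟩ := hx
  have h : σ x * x = (a - σ a) + k := sub_eq_iff_eq_add.mp ha
  have hcom : ∀ y : A, k * y = y * k := fun y => Algebra.commutes α y
  set z : A := x * x - k with hz
  set c : A := k * a + σ x * a * x + k * (x * x) with hc
  have hσz : σ z = σ x * σ x - k := by
    rw [hz, map_sub, hmul, hσk]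
  have hσc : σ c = k * σ a + σ x * σ a * x + k * (σ x * σ x) := by
    rw [hc, map_add, map_add, hmul, hmul, hmul, hmul, hσk, hinv, hmul x x]
    rw [show σ a * k = k * σ a from (hcom (σ a)).symm,
        show σ x * σ x * k = k * (σ x * σ x) from (hcom (σ x * σ x)).symm]
    noncomm_ring
  have heq : σ z * z = c - σ c := by
    rw [hσz, hz, hσc, hc]
    calc (σ x * σ x - k) * (x * x - k)
        = σ x * (σ x * x) * x - (σ x * σ x) * k - k * (x * x) + k * k := by noncomm_ring
      _ = σ x * ((a - σ a) + k) * x - (σ x * σ x) * k - k * (x * x) + k * k := by rw [h]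
      _ = σ x * a * x - σ x * σ a * x + (σ x * k) * x - (σ x * σ x) * k
            - k * (x * x) + k * k := by noncomm_ring
      _ = σ x * a * x - σ x * σ a * x + (k * σ x) * x - k * (σ x * σ x)
            - k * (x * x) + k * k := by
          rw [show σ x * k = k * σ x from (hcom (σ x)).symm,
              show σ x * σ x * k = k * (σ x * σ x) from (hcom (σ x * σ x)).symm]
      _ = σ x * a * x - σ x * σ a * x + k * (σ x * x) - k * (σ x * σ x)
            - k * (x * x) + k * k := by noncomm_ring
      _ = σ x * a * x - σ x * σ a * x + k * ((a - σ a) + k) - k * (σ x * σ x)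
            - k * (x * x) + k * k := by rw [h]
      _ = ((k * a + σ x * a * x + k * (x * x))
            - (k * σ a + σ x * σ a * x + k * (σ x * σ x)))
            + ((k * k + k * k) - (k * (x * x) + k * (x * x))) := by noncomm_ring
      _ = (k * a + σ x * a * x + k * (x * x))
            - (k * σ a + σ x * σ a * x + k * (σ x * σ x)) := by
          rw [hadd (k * k), hadd (k * (x * x)), sub_zero, add_zero]
  have hz0 : z = 0 := by
    refine haniso z ⟨0, ?_⟩ ⟨c, heq⟩
    rw [map_zero, sub_zero]
    exact ⟨c, heq⟩
  have : x * x = k := by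
    have := sub_eq_zero.mp (hz ▸ hz0)
    exact this
  rw [pow_two, this, hk]
end

section
/- Let (A,σ) be a central simple algebra with orthogonal involution over a field F of characteristic 2. If S(A,σ) ⊆ Sym(A,σ) = {x ∈ A : σ(x) = x}, then σ is direct: σ(x)x ∈ Alt(A,σ) implies x = 0. -/
/-- If `S(A,σ) ⊆ Sym(A,σ)`, then `σ` is direct. -/
theorem direct_of_subset_sym {F : Type*} [Field F] [CharP F 2]
    {A : Type*} [Ring A] [Algebra F A] [FiniteDimensional F A]
    [Algebra.IsCentral F A] [IsSimpleRing A]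
    (σ : A ≃ₗ[F] A) (hmul : ∀ a b : A, σ (a * b) = σ b * σ a)
    (hinv : ∀ a : A, σ (σ a) = a)
    (horth : (1 : A) ∉ {z : A | ∃ a : A, z = a - σ a})
    (hsub : {x : A | ∃ α : F, σ x * x - algebraMap F A α ∈ {z : A | ∃ a : A, z = a - σ a}}
      ⊆ {x : A | σ x = x}) :
    ∀ x : A, σ x * x ∈ {z : A | ∃ a : A, z = a - σ a} → x = 0 := by
  intro x hx
  -- σ 1 = 1
  have hσ1 : σ (1 : A) = 1 := by
    have h := hmul 1 (σ 1)
    rw [one_mul, hinv] at h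
    simpa using h.symm
  -- σ x = x
  have hsx : σ x = x := hsub ⟨0, by simpa using hx⟩
  obtain ⟨a, ha⟩ := hx
  -- key relation : σ b * x = x * b for all b
  have key : ∀ b : A, σ b * x = x * b := by
    intro b
    have hxb : σ (x * b) = x * b := by
      apply hsub
      refine ⟨0, ⟨σ b * a * b, ?_⟩⟩
      have hc : σ (σ b * a * b) = σ b * σ a * b := by
        rw [mul_assoc, hmul, hmul, hinv, mul_assoc]
      rw [map_zero, sub_zero, hmul, mul_assoc, ← mul_assoc (σ x), ha, hc,
        sub_mul, mul_sub, mul_assoc, mul_assoc]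
    rw [hmul, hsx] at hxb
    exact hxb
  -- consequence : x * (b * c) = x * (c * b)
  have key2 : ∀ b c : A, x * (b * c) = x * (c * b) := by
    intro b c
    rw [← key (b * c), hmul, mul_assoc, key b, ← mul_assoc, key c, mul_assoc]
  -- the two-sided ideal {c | x * c = 0}
  let J : TwoSidedIdeal A := TwoSidedIdeal.mk' {c | x * c = 0}
    (by simp) (fun {b c} hb hc => by simp only [Set.mem_setOf_eq] at *; rw [mul_add, hb, hc, add_zero])
    (fun {b} hb => by simp only [Set.mem_setOf_eq] at *; rw [mul_neg, hb, neg_zero])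
    (fun {b c} hc => by
      simp only [Set.mem_setOf_eq] at *
      rw [key2, ← mul_assoc, hc, zero_mul])
    (fun {b c} hb => by
      simp only [Set.mem_setOf_eq] at *
      rw [← mul_assoc, hb, zero_mul])
  have hJ : ∀ c : A, c ∈ J ↔ x * c = 0 := fun c =>
    TwoSidedIdeal.mem_mk' _ _ _ _ _ _ c
  rcases eq_bot_or_eq_top J with hbot | htop
  · -- J = ⊥ : A is commutative
    have hcomm : ∀ b c : A, b * c = c * b := by
      intro b c
      have : b * c - c * b ∈ J := by
        rw [hJ, mul_sub, key2, sub_self]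
      rw [hbot, TwoSidedIdeal.mem_bot] at this
      exact sub_eq_zero.mp this
    have hcent : ∀ b : A, ∃ α : F, algebraMap F A α = b := by
      intro b
      have hb : b ∈ Subalgebra.center F A :=
        Subalgebra.mem_center_iff.mpr fun c => hcomm c b
      exact Algebra.mem_bot.mp (Algebra.IsCentral.out hb)
    have hσall : ∀ b : A, σ b = b := by
      intro b
      obtain ⟨α, rfl⟩ := hcent b
      rw [Algebra.algebraMap_eq_smul_one, map_smul, hσ1]
    have hxx : x * x = 0 := by nth_rewrite 1 [← hsx]; rw [ha, hσall, sub_self]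
    obtain ⟨α, rfl⟩ := hcent x
    rw [← map_mul] at hxx
    have hα : α * α = 0 := by
      exact (algebraMap F A).injective (by rw [hxx, map_zero])
    rw [mul_self_eq_zero.mp hα, map_zero]
  · have : (1 : A) ∈ J := htop ▸ TwoSidedIdeal.mem_top _
    rw [hJ, mul_one] at this
    exact this
end

section
/- Let (V,b) be a finite-dimensional symmetric non-alternating bilinear space over a field F of characteristic 2, with adjoint involution σ_b on End_F(V). For every x ∈ S(End_F(V), σ_b) and every v ∈ V: b(x(v), x(v)) = q_{σ_b}(x) · b(v,v). -/
/-- For the adjoint involution `σ_b` of a symmetric non-alternating bilinear space,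
`b(x(v), x(v)) = q_{σ_b}(x) · b(v,v)`. -/
theorem adjoint_alternator_value {F V : Type*} [Field F] [CharP F 2]
    [AddCommGroup V] [Module F V] [FiniteDimensional F V]
    (b : LinearMap.BilinForm F V)
    (hsymm : ∀ v w : V, b v w = b w v)
    (hnd : ∀ v : V, (∀ w : V, b v w = 0) → v = 0)
    (hnalt : ∃ v : V, b v v ≠ 0)
    (σ : Module.End F V ≃ₗ[F] Module.End F V)
    (hadj : ∀ (x : Module.End F V) (v w : V), b (x v) w = b v (σ x w))
    (x : Module.End F V) (α : F)
    (hx : σ x * x - algebraMap F (Module.End F V) α ∈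
      {z : Module.End F V | ∃ a : Module.End F V, z = a - σ a})
    (v : V) :
    b (x v) (x v) = α * b v v := by
  obtain ⟨a, ha⟩ := hx
  have h1 : σ x (x v) = a v - σ a v + α • v := by
    have := congrArg (fun z : Module.End F V => z v)
      (sub_eq_iff_eq_add.mp ha)
    simpa [Module.algebraMap_end_apply] using this
  have h2 : b (x v) (x v) = b v (σ x (x v)) := hadj x v (x v)
  have h3 : b v (σ a v) = b (a v) v := (hadj a v v).symm
  rw [h2, h1]
  simp [map_add, map_sub, map_smul, h3, hsymm v (a v), mul_comm]
end

section
/- Let (V,b) be a finite-dimensional symmetric bilinear space over a field F of characteristic 2 that represents 1 (b(v,v) = 1 for some v). Then every value of the alternator form q_{σ_b} of the adjoint involution σ_b on End_F(V) is represented by b: D(q_{σ_b}) ⊆ D(b), where D denotes the set of values b(w,w) (resp. q(x)) for nonzero arguments. -/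
/-- If `b` represents `1`, then every value of the alternator form of the adjoint
involution is represented by `b`. -/
theorem adjoint_alternator_values_subset {F V : Type*} [Field F] [CharP F 2]
    [AddCommGroup V] [Module F V] [FiniteDimensional F V]
    (b : LinearMap.BilinForm F V)
    (hsymm : ∀ v w : V, b v w = b w v)
    (hnd : ∀ v : V, (∀ w : V, b v w = 0) → v = 0)
    (hnalt : ∃ v : V, b v v ≠ 0)
    (hone : ∃ v : V, b v v = 1)
    (σ : Module.End F V ≃ₗ[F] Module.End F V)
    (hadj : ∀ (x : Module.End F V) (v w : V), b (x v) w = b v (σ x w)) :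
    ∀ (x : Module.End F V) (α : F), x ≠ 0 →
      σ x * x - algebraMap F (Module.End F V) α ∈
        {z : Module.End F V | ∃ a : Module.End F V, z = a - σ a} →
      ∃ v : V, v ≠ 0 ∧ b v v = α := by
  intro x α hx hmem
  obtain ⟨a, ha⟩ := hmem
  obtain ⟨v, hv⟩ := hone
  have hprod : σ x * x = algebraMap F (Module.End F V) α + (a - σ a) := by
    rw [← ha]; abel
  have key : ∀ u : V, b (x u) (x u) = α * b u u := by
    intro u
    have h1 : b (x u) (x u) = b u (σ x (x u)) := hadj x u (x u)
    have h2 : σ x (x u) = α • u + (a u - σ a u) := by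
      have := congrArg (fun f : Module.End F V => f u) hprod
      simpa [Module.algebraMap_end_apply] using this
    have h3 : b u (σ a u) = b u (a u) := by
      rw [← hadj a u u, hsymm]
    rw [h1, h2]
    simp [h3, mul_comm]
  by_cases h0 : x v = 0
  · have hα : α = 0 := by
      have := key v
      rw [h0, hv, mul_one] at this
      simpa using this.symm
    obtain ⟨u, hu⟩ : ∃ u, x u ≠ 0 := by
      by_contra h
      push_neg at h
      exact hx (LinearMap.ext fun u => by simp [h u])
    exact ⟨x u, hu, by rw [key u, hα, zero_mul]⟩
  · exact ⟨x v, h0, by rw [key v, hv, mul_one]⟩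
end

section
/- Let t be the transpose involution on M_n(F), F a field of characteristic 2. Then the set of values of the alternator form q_t equals F², the set of squares in F; i.e., Q(q_t) = F². -/
open Matrix in
/-- The set of values of the alternator form of the transpose involution on `Mₙ(F)`
is exactly the set of squares `F²`. -/
theorem transpose_alternator_values {F : Type*} [Field F] [CharP F 2]
    (n : ℕ) (hn : 0 < n) :
    {α : F | ∃ x : Matrix (Fin n) (Fin n) F,
        xᵀ * x - algebraMap F (Matrix (Fin n) (Fin n) F) α ∈
          {z : Matrix (Fin n) (Fin n) F | ∃ a : Matrix (Fin n) (Fin n) F, z = a - aᵀ}} =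
      {α : F | ∃ β : F, α = β ^ 2} := by
  ext α
  constructor
  · rintro ⟨x, a, h⟩
    set i : Fin n := ⟨0, hn⟩
    have h2 := congrArg (fun m => m i i) h
    simp [Matrix.mul_apply, Matrix.algebraMap_matrix_apply, Matrix.one_apply,
      sub_eq_zero] at h2
    refine ⟨∑ k, x k i, ?_⟩
    rw [sum_pow_char, ← h2]
    simp [sq]
  · rintro ⟨β, rfl⟩
    refine ⟨β • 1, 0, ?_⟩
    simp [Algebra.algebraMap_eq_smul_one, smul_smul, sq]
end

section
/- Let K/F be a separable quadratic field extension in characteristic 2 and b a symmetric bilinear form over F. Then the set of elements of F represented diagonally by b_K equals the set represented by b: D(b_K) ∩ F = D(b), where D(b) = {b(v,v) : 0 ≠ v}. -/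
/-!
Write `K = F ⊕ F η`. Since `b` is symmetric and `2 = 0`, the cross terms of `b_K` cancel and
`b_K(1 ⊗ v₀ + η ⊗ v₁) = b(v₀, v₀) + η² b(v₁, v₁)`. Separability gives `F(η) = F(η²)`, so
`η² ∉ F`; hence this value lies in `F` only if `b(v₁, v₁) = 0`, and then it is `b(v₀, v₀)`.
-/

open IntermediateField TensorProduct

theorem IntermediateField.mem_bot_of_pow_expChar_mem_bot {F E : Type*} [Field F] [Field E]
    [Algebra F E] {a : E} (ha : IsSeparable F a) (q : ℕ) [ExpChar F q]
    (h : a ^ q ∈ (⊥ : IntermediateField F E)) : a ∈ (⊥ : IntermediateField F E) := by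
  rwa [← adjoin_simple_eq_bot_iff, adjoin_simple_eq_adjoin_pow_expChar_of_isSeparable F E ha q,
    adjoin_simple_eq_bot_iff]

theorem IntermediateField.span_one_pair_eq_top {F E : Type*} [Field F] [Field E] [Algebra F E]
    [FiniteDimensional F E] (hdim : Module.finrank F E = 2) {a : E}
    (ha : a ∉ (⊥ : IntermediateField F E)) : Submodule.span F {1, a} = ⊤ := by
  have hli : LinearIndependent F ![1, a] := by
    refine LinearIndependent.pair_iff' one_ne_zero |>.mpr fun c hc ↦ ha ?_
    exact mem_bot.mpr ⟨c, by rw [← hc, Algebra.algebraMap_eq_smul_one]⟩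
  simpa [Set.pair_comm] using hli.span_eq_top_of_card_eq_finrank' (by simp [hdim])

theorem TensorProduct.exists_eq_tmul_add_tmul {R M N : Type*} [CommSemiring R]
    [AddCommMonoid M] [AddCommMonoid N] [Module R M] [Module R N] {m₀ m₁ : M}
    (h : Submodule.span R {m₀, m₁} = ⊤) (w : M ⊗[R] N) :
    ∃ n₀ n₁ : N, w = m₀ ⊗ₜ n₀ + m₁ ⊗ₜ n₁ := by
  induction w with
  | zero => exact ⟨0, 0, by simp⟩
  | tmul m n =>
    obtain ⟨a, c, rfl⟩ := Submodule.mem_span_pair.mp (h ▸ Submodule.mem_top : m ∈ _)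
    exact ⟨a • n, c • n, by rw [add_tmul, smul_tmul, smul_tmul]⟩
  | add x y hx hy =>
    obtain ⟨x₀, x₁, rfl⟩ := hx
    obtain ⟨y₀, y₁, rfl⟩ := hy
    exact ⟨x₀ + y₀, x₁ + y₁, by rw [tmul_add, tmul_add]; abel⟩

theorem LinearMap.IsSymm.apply_add_add_of_charTwo {R M : Type*} [CommRing R] [CharP R 2]
    [AddCommGroup M] [Module R M] {B : LinearMap.BilinForm R M} (hB : LinearMap.IsSymm B) (x y : M) :
    B (x + y) (x + y) = B x x + B y y := by
  simp only [map_add, LinearMap.add_apply]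
  rw [← hB.eq x y]
  linear_combination B x y * CharTwo.two_eq_zero (R := R)

theorem LinearMap.BilinForm.baseChange_tmul_add_tmul_self {F K V : Type*} [Field F] [CharP F 2]
    [Field K] [Algebra F K] [AddCommGroup V] [Module F V] {b : LinearMap.BilinForm F V}
    (hb : LinearMap.IsSymm b) (k₀ k₁ : K) (v₀ v₁ : V) :
    b.baseChange K (k₀ ⊗ₜ v₀ + k₁ ⊗ₜ v₁) (k₀ ⊗ₜ v₀ + k₁ ⊗ₜ v₁) =
      k₀ ^ 2 * algebraMap F K (b v₀ v₀) + k₁ ^ 2 * algebraMap F K (b v₁ v₁) := by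
  have : CharP K 2 := charP_of_injective_algebraMap (algebraMap F K).injective 2
  rw [(IsSymm.baseChange K hb).apply_add_add_of_charTwo, baseChange_tmul, baseChange_tmul,
    Algebra.smul_def, Algebra.smul_def, sq, sq, mul_comm, mul_comm (algebraMap F K _)]

theorem LinearMap.BilinForm.apply_self_eq_of_baseChange_eq_algebraMap {F K V : Type*} [Field F]
    [CharP F 2] [Field K] [Algebra F K] [AddCommGroup V] [Module F V]
    {b : LinearMap.BilinForm F V} (hb : LinearMap.IsSymm b) {η : K}
    (hη : η ^ 2 ∉ (⊥ : IntermediateField F K)) {v₀ v₁ : V} {α : F}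
    (h : b.baseChange K (1 ⊗ₜ v₀ + η ⊗ₜ v₁) (1 ⊗ₜ v₀ + η ⊗ₜ v₁) = algebraMap F K α) :
    b v₁ v₁ = 0 ∧ b v₀ v₀ = α := by
  rw [baseChange_tmul_add_tmul_self hb, one_pow, one_mul] at h
  have hv₁ : b v₁ v₁ = 0 := by
    by_contra hne
    have : η ^ 2 = algebraMap F K ((α - b v₀ v₀) / b v₁ v₁) := by
      rw [map_div₀, map_sub, ← h, eq_div_iff (by simpa using hne)]
      ring
    exact hη (this ▸ IntermediateField.algebraMap_mem _ _)
  rw [hv₁, map_zero, mul_zero, add_zero] at h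
  exact ⟨hv₁, (algebraMap F K).injective h⟩

theorem baseChange_values_inter_general {F K V : Type*} [Field F] [CharP F 2]
    [Field K] [Algebra F K] [FiniteDimensional F K]
    (hdim : Module.finrank F K = 2) [Algebra.IsSeparable F K]
    [AddCommGroup V] [Module F V]
    (b : LinearMap.BilinForm F V) (hsymm : ∀ v w : V, b v w = b w v) :
    {α : F | ∃ w : TensorProduct F K V, w ≠ 0 ∧
        (LinearMap.BilinForm.baseChange K b) w w = algebraMap F K α} =
      {α : F | ∃ v : V, v ≠ 0 ∧ b v v = α} := by
  obtain ⟨η, hη⟩ : ∃ η : K, η ∉ (⊥ : IntermediateField F K) := by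
    by_contra! h
    have := bot_eq_top_iff_finrank_eq_one.mp (eq_top_iff.mpr fun x _ ↦ h x)
    omega
  have hη2 : η ^ 2 ∉ (⊥ : IntermediateField F K) := fun h ↦
    hη (mem_bot_of_pow_expChar_mem_bot (Algebra.IsSeparable.isSeparable F η) 2 h)
  ext α
  constructor
  · rintro ⟨w, hw0, hw⟩
    obtain ⟨v₀, v₁, rfl⟩ := exists_eq_tmul_add_tmul (span_one_pair_eq_top hdim hη) w
    obtain ⟨hv₁, hα⟩ :=
      LinearMap.BilinForm.apply_self_eq_of_baseChange_eq_algebraMap ⟨hsymm⟩ hη2 hw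
    by_cases hv₀ : v₀ = 0
    · subst hv₀
      exact ⟨v₁, fun h ↦ hw0 (by simp [h]), by simp [hv₁, ← hα]⟩
    · exact ⟨v₀, hv₀, hα⟩
  · rintro ⟨v, hv, rfl⟩
    refine ⟨1 ⊗ₜ v, (Module.FaithfullyFlat.one_tmul_eq_zero_iff F V (A := K) v).not.mpr hv, ?_⟩
    rw [LinearMap.BilinForm.baseChange_tmul, one_mul, Algebra.algebraMap_eq_smul_one]

/-- For a separable quadratic extension `K/F` in characteristic 2,
`D(b_K) ∩ F = D(b)`. -/
theorem baseChange_values_inter {F K V : Type*} [Field F] [CharP F 2]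
    [Field K] [Algebra F K] [FiniteDimensional F K]
    (hdim : Module.finrank F K = 2) [Algebra.IsSeparable F K]
    [AddCommGroup V] [Module F V] [FiniteDimensional F V]
    (b : LinearMap.BilinForm F V) (hsymm : ∀ v w : V, b v w = b w v) :
    {α : F | ∃ w : TensorProduct F K V, w ≠ 0 ∧
        (LinearMap.BilinForm.baseChange K b) w w = algebraMap F K α} =
      {α : F | ∃ v : V, v ≠ 0 ∧ b v v = α} :=
  baseChange_values_inter_general hdim b hsymm
end

section
/- Let F be a field of characteristic 2 and b a bilinear n-fold Pfister form over F. Then b is anisotropic if and only if the set Q(b) = D(b) ∪ {0}, viewed as a vector space over the subfield F² of squares, satisfies dim_{F²} Q(b) = 2ⁿ. -/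
/-- The subfield `F² = {λ² : λ ∈ F}` of a field of characteristic 2. -/
def sqSubfield (F : Type*) [Field F] [CharP F 2] : Subfield F where
  carrier := {x : F | ∃ y : F, x = y ^ 2}
  mul_mem' := by rintro a b ⟨x, rfl⟩ ⟨y, rfl⟩; exact ⟨x * y, by ring⟩
  one_mem' := ⟨1, by ring⟩
  add_mem' := by
    rintro a b ⟨x, rfl⟩ ⟨y, rfl⟩
    haveI : Fact (Nat.Prime 2) := ⟨Nat.prime_two⟩
    exact ⟨x + y, (add_pow_char x y 2).symm⟩
  zero_mem' := ⟨0, by ring⟩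
  neg_mem' := by rintro a ⟨x, rfl⟩; exact ⟨x, by rw [CharTwo.neg_eq]⟩
  inv_mem' := by rintro a ⟨x, rfl⟩; exact ⟨x⁻¹, by rw [inv_pow]⟩

/-- The bilinear `n`-fold Pfister form `⟨⟨α₁,…,αₙ⟩⟩ = ⊗ᵢ⟨1,αᵢ⟩`, realized as the
diagonal symmetric bilinear form on `Finset (Fin n) → F`. -/
noncomputable def pfister {F : Type*} [Field F] {n : ℕ} (α : Fin n → F) :
    (Finset (Fin n) → F) → (Finset (Fin n) → F) → F :=
  fun v w => ∑ S : Finset (Fin n), (∏ i ∈ S, α i) * v S * w S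

section Aux

variable {F : Type*} [Field F] [CharP F 2] {n : ℕ}

lemma pfister_eq_sum_smul (α : Fin n → F) (v : Finset (Fin n) → F) :
    pfister α v v
      = ∑ S : Finset (Fin n),
          ((⟨(v S) ^ 2, v S, rfl⟩ : sqSubfield F)) • (∏ i ∈ S, α i) := by
  unfold pfister
  refine Finset.sum_congr rfl fun S _ => ?_
  show _ = (v S) ^ 2 * _
  ring

lemma pfister_span_eq (α : Fin n → F) :
    ((Submodule.span (sqSubfield F)
        (Set.range fun S : Finset (Fin n) => ∏ i ∈ S, α i)) : Set F)
      = {x : F | ∃ v, pfister α v v = x} := by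
  ext x
  simp only [SetLike.mem_coe, Submodule.mem_span_range_iff_exists_fun, Set.mem_setOf_eq]
  constructor
  · rintro ⟨g, rfl⟩
    refine ⟨fun S => Classical.choose (g S).2, ?_⟩
    unfold pfister
    refine Finset.sum_congr rfl fun S _ => ?_
    have h := Classical.choose_spec (g S).2
    show _ = ((g S : F)) * _
    rw [h]; ring
  · rintro ⟨v, rfl⟩
    exact ⟨fun S => ⟨(v S) ^ 2, v S, rfl⟩, (pfister_eq_sum_smul α v).symm⟩

lemma pfister_aniso_iff_li (α : Fin n → F) :
    (∀ v : Finset (Fin n) → F, pfister α v v = 0 → v = 0) ↔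
      LinearIndependent (sqSubfield F) (fun S : Finset (Fin n) => ∏ i ∈ S, α i) := by
  rw [Fintype.linearIndependent_iff]
  constructor
  · intro h g hg
    set v : Finset (Fin n) → F := fun S => Classical.choose (g S).2 with hv
    have hpf : pfister α v v = 0 := by
      have : pfister α v v = ∑ S : Finset (Fin n), g S • (∏ i ∈ S, α i) := by
        unfold pfister
        refine Finset.sum_congr rfl fun S _ => ?_
        have h2 := Classical.choose_spec (g S).2
        show _ = ((g S : F)) * _
        rw [h2]; ring
      rw [this, hg]
    intro S
    have hv0 : v S = 0 := congrFun (h v hpf) S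
    have h2 := Classical.choose_spec (g S).2
    ext
    rw [h2]
    show (v S) ^ 2 = (0 : F)
    rw [hv0]; ring
  · intro h v hv
    have hg : ∑ S : Finset (Fin n),
        ((⟨(v S) ^ 2, v S, rfl⟩ : sqSubfield F)) • (∏ i ∈ S, α i) = 0 := by
      rw [← pfister_eq_sum_smul, hv]
    funext S
    have := h (fun S => ⟨(v S) ^ 2, v S, rfl⟩) hg S
    have h0 : (v S) ^ 2 = 0 := congrArg Subtype.val this
    exact pow_eq_zero_iff two_ne_zero |>.mp h0

end Aux

/-- A bilinear `n`-fold Pfister form is anisotropic iff its value set `Q(b)` is an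
`F²`-subspace of `F` of dimension `2ⁿ`. -/
theorem pfister_anisotropic_iff_dim {F : Type*} [Field F] [CharP F 2] {n : ℕ}
    (α : Fin n → F) (hα : ∀ i, α i ≠ 0) :
    (∀ v : Finset (Fin n) → F, pfister α v v = 0 → v = 0) ↔
      ∃ W : Submodule ↥(sqSubfield F) F,
        (W : Set F) = {x : F | ∃ v, pfister α v v = x} ∧
        Module.finrank ↥(sqSubfield F) ↥W = 2 ^ n := by
  rw [pfister_aniso_iff_li]
  constructor
  · intro hli
    refine ⟨Submodule.span (sqSubfield F)
      (Set.range fun S : Finset (Fin n) => ∏ i ∈ S, α i), pfister_span_eq α, ?_⟩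
    rw [finrank_span_eq_card hli, Fintype.card_finset, Fintype.card_fin]
  · rintro ⟨W, hW, hdim⟩
    have hWeq : W = Submodule.span (sqSubfield F)
        (Set.range fun S : Finset (Fin n) => ∏ i ∈ S, α i) :=
      SetLike.ext' (hW.trans (pfister_span_eq α).symm)
    rw [linearIndependent_iff_card_eq_finrank_span, Fintype.card_finset, Fintype.card_fin]
    rw [hWeq] at hdim
    exact hdim.symm
end
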